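/- Let X^1, …, X^{n+1} be chain complexes each equipped with data (ξ_i, η_i, h_i) satisfying η∘ξ = Id, d(h) = ξ∘η − Id, h∘ξ = 0, η∘h = 0, h∘h = 0, and let f^i : X^i → X^{i+1} be chain maps. Define the functional homology operation H_*(f^n, …, f^1) = η ∘ f^n ∘ h ∘ f^{n−1} ∘ h ∘ ⋯ ∘ h ∘ f^1 ∘ ξ. Then, working over 𝔽₂, the identity ∑_{i=1}^{n−1} H_*(f^n, …, f^{i+1}∘f^i, …, f^1) = ∑_{i=1}^{n−1} H_*(f^n, …, f^{i+1}) ∘ H_*(f^i, …, f^1) holds. -/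

import Mathlib

/-! Write `C = f^n ∘ h ∘ ⋯ ∘ h ∘ f^1`. Because the `f^i` are chain maps, `dC + Cd` is the sum,
over the slots of `C`, of the composite in which that slot's `h` is replaced by
`dh + hd = ξη + 1` (over `𝔽₂` there are no signs, and the identity in the slot before `f^1`
contributes `d + d = 0`). Sandwiched between `η` and `ξ` the left side
vanishes, as `ηd = 0 = dξ`. In the summand for the slot between `f^i` and `f^{i+1}`, the `1`
gives `H_*(f^n, …, f^{i+1} ∘ f^i, …, f^1)` and `ξη` gives
`H_*(f^n, …, f^{i+1}) ∘ H_*(f^i, …, f^1)`, so the vanishing sum is the identity. -/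

/-- The interleaved composite `f^{a+k-1} ∘ h ∘ f^{a+k-2} ∘ h ∘ ⋯ ∘ h ∘ f^a`
of the chain maps `f^i : X^i → X^{i+1}`, with a copy of the homotopy `h`
inserted at each intermediate complex `X^j` except those in the skip set `S`
(the functional homology operation `H_*(f^{b},…,f^{a})` has no `h` before the
first map, which corresponds to `a ∈ S`; skipping further `h`'s at `j ∈ S`
amounts to composing the consecutive maps `f^j ∘ f^{j-1}`). -/
def interComp {X : ℕ → Type} [∀ i, AddCommGroup (X i)] [∀ i, Module (ZMod 2) (X i)]
    (f : ∀ i, X i →ₗ[ZMod 2] X (i + 1)) (h : ∀ i, X i →ₗ[ZMod 2] X i)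
    (S : ℕ → Prop) [DecidablePred S] (a : ℕ) : ∀ k, X a →ₗ[ZMod 2] X (a + k)
  | 0 => LinearMap.id
  | (k + 1) =>
      f (a + k) ∘ₗ (if S (a + k) then LinearMap.id else h (a + k)) ∘ₗ
        interComp f h S a k

/-- Transport of a linear map along an equality of indices. -/
def castCod {X : ℕ → Type} [∀ i, AddCommGroup (X i)] [∀ i, Module (ZMod 2) (X i)]
    {M : Type} [AddCommGroup M] [Module (ZMod 2) M]
    {a b : ℕ} (e : a = b) (g : M →ₗ[ZMod 2] X a) : M →ₗ[ZMod 2] X b :=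
  e ▸ g

open Finset Function

theorem add_self_eq_zero_of_zmod_two {M : Type*} [AddCommGroup M] [Module (ZMod 2) M] (x : M) :
    x + x = 0 := by
  rw [← two_smul (ZMod 2) x, show (2 : ZMod 2) = 0 from rfl, zero_smul]

theorem eq_of_add_eq_zero_of_zmod_two {M : Type*} [AddCommGroup M] [Module (ZMod 2) M] {x y : M}
    (hxy : x + y = 0) : x = y :=
  (eq_neg_of_add_eq_zero_left hxy).trans
    (neg_eq_of_add_eq_zero_right (add_self_eq_zero_of_zmod_two y))

theorem add_eq_add_add_add_of_zmod_two {M : Type*} [AddCommGroup M] [Module (ZMod 2) M]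
    (x y z : M) : x + y = z + y + (x + z) := by
  rw [show z + y + (x + z) = x + y + (z + z) by abel, add_self_eq_zero_of_zmod_two, add_zero]

theorem LinearMap.comp_finsetSum {R M N P ι : Type*} [CommSemiring R] [AddCommMonoid M]
    [AddCommMonoid N] [AddCommMonoid P] [Module R M] [Module R N] [Module R P]
    (q : N →ₗ[R] P) (s : Finset ι) (g : ι → M →ₗ[R] N) :
    q ∘ₗ (∑ i ∈ s, g i) = ∑ i ∈ s, q ∘ₗ g i :=
  map_sum (LinearMap.llcomp R M N P q) g s

theorem LinearMap.finsetSum_comp {R M N P ι : Type*} [CommSemiring R] [AddCommMonoid M]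
    [AddCommMonoid N] [AddCommMonoid P] [Module R M] [Module R N] [Module R P]
    (s : Finset ι) (g : ι → N →ₗ[R] P) (q : M →ₗ[R] N) :
    (∑ i ∈ s, g i) ∘ₗ q = ∑ i ∈ s, g i ∘ₗ q :=
  map_sum (LinearMap.lcomp R P q) g s

section Casts

variable {X Y : ℕ → Type} [∀ i, AddCommGroup (X i)] [∀ i, Module (ZMod 2) (X i)]
  [∀ i, AddCommGroup (Y i)] [∀ i, Module (ZMod 2) (Y i)]
  {M N : Type} [AddCommGroup M] [Module (ZMod 2) M] [AddCommGroup N] [Module (ZMod 2) N]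
  {a b : ℕ}

theorem castCod_comp (e : a = b) (g : M →ₗ[ZMod 2] X a) (p : N →ₗ[ZMod 2] M) :
    castCod e g ∘ₗ p = castCod e (g ∘ₗ p) := by
  subst e; rfl

theorem comp_castCod (F : ∀ i, X i →ₗ[ZMod 2] Y i) (e : a = b) (g : M →ₗ[ZMod 2] X a) :
    F b ∘ₗ castCod e g = castCod e (F a ∘ₗ g) := by
  subst e; rfl

end Casts

section InterleavedComp

variable {X : ℕ → Type} [∀ i, AddCommGroup (X i)] [∀ i, Module (ZMod 2) (X i)]
  (f : ∀ i, X i →ₗ[ZMod 2] X (i + 1))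

def interleavedComp (g : ∀ i, X i →ₗ[ZMod 2] X i) (a : ℕ) : ∀ k, X a →ₗ[ZMod 2] X (a + k)
  | 0 => LinearMap.id
  | k + 1 => f (a + k) ∘ₗ g (a + k) ∘ₗ interleavedComp g a k

def slotFamily (h : ∀ i, X i →ₗ[ZMod 2] X i) (S : ℕ → Prop) [DecidablePred S] :
    ∀ i, X i →ₗ[ZMod 2] X i :=
  fun i => if S i then LinearMap.id else h i

theorem interComp_eq_interleavedComp (h : ∀ i, X i →ₗ[ZMod 2] X i)
    (S : ℕ → Prop) [DecidablePred S] (a k : ℕ) :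
    interComp f h S a k = interleavedComp f (slotFamily h S) a k := by
  induction k with
  | zero => rfl
  | succ k ih => simp only [interComp, interleavedComp, slotFamily, ih]

variable {f}

theorem interleavedComp_congr {g g' : ∀ i, X i →ₗ[ZMod 2] X i} {a k : ℕ}
    (hg : ∀ j, a ≤ j → j < a + k → g j = g' j) :
    interleavedComp f g a k = interleavedComp f g' a k := by
  induction k with
  | zero => rfl
  | succ k ih =>
    simp only [interleavedComp, hg (a + k) (by omega) (by omega),
      ih fun j hj hjk => hg j hj (by omega)]

theorem interleavedComp_update_of_notMem (g : ∀ i, X i →ₗ[ZMod 2] X i) {a k p : ℕ}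
    (hp : p ∉ Set.Ico a (a + k)) (v : X p →ₗ[ZMod 2] X p) :
    interleavedComp f (update g p v) a k = interleavedComp f g a k :=
  interleavedComp_congr fun j hj hjk =>
    update_of_ne (fun hjp => hp (by subst hjp; exact ⟨hj, hjk⟩)) _ _

theorem interleavedComp_split (g : ∀ i, X i →ₗ[ZMod 2] X i) {a k₁ k₂ k b : ℕ}
    (hk : k₁ + k₂ = k) (hb : a + k₁ = b) (e : b + k₂ = a + k) :
    interleavedComp f g a k
      = castCod e (interleavedComp f g b k₂) ∘ₗ castCod hb (interleavedComp f g a k₁) := by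
  subst hk hb
  induction k₂ with
  | zero => rfl
  | succ l ih =>
    have hcast : ∀ {x y : ℕ} (hxy : x = y) (Z : X (a + k₁) →ₗ[ZMod 2] X x)
        (W : X a →ₗ[ZMod 2] X (a + k₁)),
        f y ∘ₗ g y ∘ₗ castCod hxy Z ∘ₗ W
          = castCod (congrArg (· + 1) hxy) (f x ∘ₗ g x ∘ₗ Z) ∘ₗ W := by
      rintro _ _ rfl _ _; rfl
    change f _ ∘ₗ g _ ∘ₗ interleavedComp f g a (k₁ + l) = _
    rw [ih (by omega), hcast]
    rfl

theorem interleavedComp_eq_update_id_comp (g : ∀ i, X i →ₗ[ZMod 2] X i) {a k : ℕ} (hk : 0 < k) :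
    interleavedComp f g a k = interleavedComp f (update g a LinearMap.id) a k ∘ₗ g a := by
  obtain ⟨k, rfl⟩ : ∃ k', k = k' + 1 := ⟨k - 1, by omega⟩
  induction k with
  | zero =>
    change f a ∘ₗ g a ∘ₗ LinearMap.id = (f a ∘ₗ update g a LinearMap.id a ∘ₗ LinearMap.id) ∘ₗ g a
    simp
  | succ k ih =>
    change f _ ∘ₗ g _ ∘ₗ interleavedComp f g a (k + 1) =
      (f _ ∘ₗ update g a LinearMap.id (a + (k + 1)) ∘ₗ _) ∘ₗ g a
    rw [ih (by omega), update_of_ne (by omega)]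
    rfl

theorem interleavedComp_update_eq_comp (g : ∀ i, X i →ₗ[ZMod 2] X i) {a m k p : ℕ}
    (hm : m < k) (hp : a + m = p) (e : p + (k - m) = a + k) (v : X p →ₗ[ZMod 2] X p) :
    interleavedComp f (update g p v) a k
      = castCod e (interleavedComp f (update g p LinearMap.id) p (k - m)) ∘ₗ v ∘ₗ
          castCod hp (interleavedComp f g a m) := by
  rw [interleavedComp_split _ (by omega : m + (k - m) = k) hp e,
    interleavedComp_update_of_notMem (a := a) (k := m) _ (by simp [← hp]),
    interleavedComp_eq_update_id_comp _ (by omega : 0 < k - m), update_idem, update_self,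
    castCod_comp, castCod_comp, LinearMap.comp_assoc]

section Commutator

variable (d : ∀ i, X i →ₗ[ZMod 2] X i)

def slotCommutator (g : ∀ i, X i →ₗ[ZMod 2] X i) (j : ℕ) : X j →ₗ[ZMod 2] X j :=
  d j ∘ₗ g j + g j ∘ₗ d j

theorem interleavedComp_commutator (hf : ∀ i, f i ∘ₗ d i = d (i + 1) ∘ₗ f i)
    (g : ∀ i, X i →ₗ[ZMod 2] X i) (a k : ℕ) :
    d (a + k) ∘ₗ interleavedComp f g a k + interleavedComp f g a k ∘ₗ d a
      = ∑ j ∈ range k, interleavedComp f (update g (a + j) (slotCommutator d g (a + j))) a k := by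
  induction k with
  | zero => simpa [interleavedComp] using add_self_eq_zero_of_zmod_two (d a)
  | succ k ih =>
    set C := interleavedComp f g a k
    have hlast : interleavedComp f (update g (a + k) (slotCommutator d g (a + k))) a (k + 1)
        = f (a + k) ∘ₗ (d (a + k) ∘ₗ g (a + k) + g (a + k) ∘ₗ d (a + k)) ∘ₗ C := by
      rw [interleavedComp, update_self, interleavedComp_update_of_notMem _ (by simp)]
      rfl
    have hrest : ∀ j ∈ range k,
        interleavedComp f (update g (a + j) (slotCommutator d g (a + j))) a (k + 1)
          = f (a + k) ∘ₗ g (a + k) ∘ₗ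
              interleavedComp f (update g (a + j) (slotCommutator d g (a + j))) a k := by
      intro j hj
      rw [interleavedComp, update_of_ne (by simp at hj; omega)]
    rw [sum_range_succ, hlast, sum_congr rfl hrest,
      ← LinearMap.comp_finsetSum, ← LinearMap.comp_finsetSum, ← ih]
    change d (a + k + 1) ∘ₗ f (a + k) ∘ₗ g (a + k) ∘ₗ C + (f (a + k) ∘ₗ g (a + k) ∘ₗ C) ∘ₗ d a = _
    rw [← LinearMap.comp_assoc, ← hf]
    simp only [LinearMap.comp_add, LinearMap.add_comp, LinearMap.comp_assoc]
    exact add_eq_add_add_add_of_zmod_two _ _ _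

end Commutator

end InterleavedComp

section FunctionalOperations

variable {X Xs : ℕ → Type} [∀ i, AddCommGroup (X i)] [∀ i, Module (ZMod 2) (X i)]
  [∀ i, AddCommGroup (Xs i)] [∀ i, Module (ZMod 2) (Xs i)]
  {f : ∀ i, X i →ₗ[ZMod 2] X (i + 1)} {d h : ∀ i, X i →ₗ[ZMod 2] X i}
  {ξ : ∀ i, Xs i →ₗ[ZMod 2] X i} {η : ∀ i, X i →ₗ[ZMod 2] Xs i}

theorem sum_comp_interleavedComp_update_comp_eq_zero (hf : ∀ i, f i ∘ₗ d i = d (i + 1) ∘ₗ f i)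
    (hdξ : ∀ i, d i ∘ₗ ξ i = 0) (hηd : ∀ i, η i ∘ₗ d i = 0) (g : ∀ i, X i →ₗ[ZMod 2] X i)
    (a k : ℕ) :
    ∑ j ∈ range k,
      η (a + k) ∘ₗ interleavedComp f (update g (a + j) (slotCommutator d g (a + j))) a k ∘ₗ ξ a
      = 0 := by
  rw [← LinearMap.comp_finsetSum, ← LinearMap.finsetSum_comp, ← interleavedComp_commutator d hf]
  simp only [LinearMap.add_comp, LinearMap.comp_assoc, hdξ, LinearMap.comp_zero, add_zero]
  rw [← LinearMap.comp_assoc, hηd, LinearMap.zero_comp]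

theorem interComp_merge_add_comp_eq_interleavedComp_update
    (hht : ∀ i, d i ∘ₗ h i + h i ∘ₗ d i = ξ i ∘ₗ η i + LinearMap.id)
    {n p : ℕ} (hp : 0 < p) (hpn : p < n) (e : p + (n - p) = 0 + n) :
    η (0 + n) ∘ₗ interComp f h (fun j => j = 0 ∨ j = p) 0 n ∘ₗ ξ 0
      + castCod (X := Xs) e
          ((η (p + (n - p)) ∘ₗ interComp f h (fun j => j = p) p (n - p) ∘ₗ ξ p) ∘ₗ
            castCod (X := Xs) (Nat.zero_add p)
              (η (0 + p) ∘ₗ interComp f h (fun j => j = 0) 0 p ∘ₗ ξ 0))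
      = η (0 + n) ∘ₗ interleavedComp f
          (update (slotFamily h (· = 0)) p (slotCommutator d (slotFamily h (· = 0)) p)) 0 n ∘ₗ
            ξ 0 := by
  set g₀ := slotFamily h (· = 0)
  have factor := interleavedComp_update_eq_comp (f := f) g₀ hpn (Nat.zero_add p) e
  have hmerged : interComp f h (fun j => j = 0 ∨ j = p) 0 n
      = interleavedComp f (update g₀ p LinearMap.id) 0 n := by
    rw [interComp_eq_interleavedComp]
    congr 1
    funext j
    by_cases hj : j = p
    · subst hj; simp [slotFamily]
    · simp [slotFamily, g₀, hj]
  have hupper : interComp f h (fun j => j = p) p (n - p)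
      = interleavedComp f (update g₀ p LinearMap.id) p (n - p) := by
    rw [interComp_eq_interleavedComp]
    refine interleavedComp_congr fun j hj _ => ?_
    by_cases hjp : j = p
    · subst hjp; simp [slotFamily]
    · simp [slotFamily, g₀, hjp, show j ≠ 0 by omega]
  have hslot : slotCommutator d g₀ p = ξ p ∘ₗ η p + LinearMap.id := by
    simp [slotCommutator, g₀, slotFamily, hp.ne', hht]
  rw [hmerged, hupper, interComp_eq_interleavedComp, hslot, factor, factor]
  simp only [← comp_castCod η, ← castCod_comp, LinearMap.comp_add, LinearMap.add_comp,
    LinearMap.comp_assoc, LinearMap.id_comp]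
  exact add_comm _ _

theorem sum_range_pred_comp_interleavedComp_update_comp_eq_zero
    (hf : ∀ i, f i ∘ₗ d i = d (i + 1) ∘ₗ f i) (hdξ : ∀ i, d i ∘ₗ ξ i = 0)
    (hηd : ∀ i, η i ∘ₗ d i = 0) (n : ℕ) :
    ∑ i ∈ range (n - 1),
      η (0 + n) ∘ₗ interleavedComp f
        (update (slotFamily h (· = 0)) (i + 1) (slotCommutator d (slotFamily h (· = 0)) (i + 1)))
          0 n ∘ₗ ξ 0 = 0 := by
  obtain _ | m := n
  · simp
  have hall :=
    sum_comp_interleavedComp_update_comp_eq_zero hf hdξ hηd (slotFamily h (· = 0)) 0 (m + 1)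
  have hslot0 : slotCommutator d (slotFamily h (· = 0)) (0 + 0) = 0 := by
    simpa [slotCommutator, slotFamily] using add_self_eq_zero_of_zmod_two (d 0)
  rw [sum_range_succ', hslot0,
    interleavedComp_update_eq_comp _ (m := 0) m.succ_pos rfl (by omega)] at hall
  simp only [LinearMap.comp_zero, LinearMap.zero_comp, add_zero] at hall
  rw [Nat.add_sub_cancel]
  refine (sum_congr rfl fun i _ => ?_).trans hall
  rw [zero_add (i + 1)]

end FunctionalOperations

theorem stmt1 {X Xs : ℕ → Type}
    [∀ i, AddCommGroup (X i)] [∀ i, Module (ZMod 2) (X i)]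
    [∀ i, AddCommGroup (Xs i)] [∀ i, Module (ZMod 2) (Xs i)]
    (d : ∀ i, X i →ₗ[ZMod 2] X i)
    (ξ : ∀ i, Xs i →ₗ[ZMod 2] X i) (η : ∀ i, X i →ₗ[ZMod 2] Xs i)
    (h : ∀ i, X i →ₗ[ZMod 2] X i)
    (f : ∀ i, X i →ₗ[ZMod 2] X (i + 1))
    (hf : ∀ i, f i ∘ₗ d i = d (i + 1) ∘ₗ f i)
    (hdξ : ∀ i, d i ∘ₗ ξ i = 0) (hηd : ∀ i, η i ∘ₗ d i = 0)
    (hht : ∀ i, d i ∘ₗ h i + h i ∘ₗ d i = ξ i ∘ₗ η i + LinearMap.id)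
    (n : ℕ) :
    ∑ i ∈ Finset.range (n - 1),
        (η (0 + n) ∘ₗ interComp f h (fun j => j = 0 ∨ j = i + 1) 0 n ∘ₗ ξ 0)
      = ∑ i ∈ (Finset.range (n - 1)).attach,
          castCod (X := Xs)
            (show ((i : ℕ) + 1) + (n - ((i : ℕ) + 1)) = 0 + n by
              have := Finset.mem_range.mp i.2; omega)
            ((η (((i : ℕ) + 1) + (n - ((i : ℕ) + 1))) ∘ₗ
                interComp f h (fun j => j = (i : ℕ) + 1) ((i : ℕ) + 1)
                  (n - ((i : ℕ) + 1)) ∘ₗ ξ ((i : ℕ) + 1)) ∘ₗ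
              castCod (X := Xs) (Nat.zero_add ((i : ℕ) + 1))
                (η (0 + ((i : ℕ) + 1)) ∘ₗ
                  interComp f h (fun j => j = 0) 0 ((i : ℕ) + 1) ∘ₗ ξ 0)) := by
  conv_lhs => rw [← sum_attach]
  refine eq_of_add_eq_zero_of_zmod_two ?_
  rw [← sum_add_distrib, sum_congr rfl fun i _ =>
    interComp_merge_add_comp_eq_interleavedComp_update hht i.1.succ_pos
      (by have := mem_range.mp i.2; omega) _]
  exact (sum_attach _ fun i => _).trans
    (sum_range_pred_comp_interleavedComp_update_comp_eq_zero hf hdξ hηd n)
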